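/- Let 𝓑 be a finite family of axis-parallel rectangles in ℝ² and suppose there exist two horizontal lines l₁, l₂ such that every rectangle in 𝓑 intersects at least one of them. Then τ(𝓑) ≤ ⌊3ν(𝓑)/2⌋. -/

import Mathlib

/-- A finite point set `S` pierces the family `F` if every member contains a point of `S`. -/
def Piercing {α : Type*} (S : Finset α) (F : Finset (Set α)) : Prop :=
  ∀ B ∈ F, ∃ p ∈ S, p ∈ B

/-- The piercing (transversal) number τ of a finite family of sets. -/
noncomputable def tau {α : Type*} (F : Finset (Set α)) : ℕ :=
  sInf {n | ∃ S : Finset α, S.card = n ∧ Piercing S F}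

/-- The independence number ν : the maximal number of pairwise disjoint members. -/
noncomputable def nu {α : Type*} (F : Finset (Set α)) : ℕ :=
  sSup {n | ∃ G ⊆ F, G.card = n ∧ (G : Set (Set α)).PairwiseDisjoint id}

/-- An axis-parallel box in ℝ^d : a product of d nonempty closed intervals. -/
def IsBox (d : ℕ) (B : Set (Fin d → ℝ)) : Prop :=
  ∃ l u : Fin d → ℝ, l ≤ u ∧ B = Set.Icc l u

/-- `f n d` : the supremum of τ over finite families of boxes in ℝ^d with ν ≤ n. -/
noncomputable def fBox (n d : ℕ) : ℕ :=
  sSup {t | ∃ F : Finset (Set (Fin d → ℝ)),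
    (∀ B ∈ F, IsBox d B) ∧ nu F ≤ n ∧ tau F = t}


/-! Sweep from the left. Let `b` be the least value of `max (r B₁) (r B₂)` over disjoint pairs
`B₁, B₂`, where `r` is the right edge. The boxes ending before `b` pairwise intersect, so by the
Helly property of boxes they share a point `q`; the boxes whose `x`-range contains `b` are pierced
by `(b, c₁)` or `(b, c₂)`. What is left lies to the right of `b`, hence is disjoint from `B₁` and
`B₂`: three points are spent while `ν` drops by two. -/

open Set

section Family

variable {α : Type*}

lemma tau_le_card {S : Finset α} {F : Finset (Set α)} (h : Piercing S F) : tau F ≤ S.card :=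
  Nat.sInf_le ⟨S, rfl, h⟩

lemma exists_piercing_card_eq_tau {F : Finset (Set α)} (hF : ∀ B ∈ F, B.Nonempty) :
    ∃ S : Finset α, S.card = tau F ∧ Piercing S F := by
  classical
  choose p hp using hF
  have hpierce : Piercing (F.attach.image fun B => p B.1 B.2) F := fun B hB =>
    ⟨p B hB, Finset.mem_image_of_mem _ (F.mem_attach ⟨B, hB⟩), hp B hB⟩
  exact Nat.sInf_mem (s := {n | ∃ S : Finset α, S.card = n ∧ Piercing S F}) ⟨_, _, rfl, hpierce⟩

lemma tau_le_tau_add_card {F G : Finset (Set α)} {S : Finset α} (hG : ∀ B ∈ G, B.Nonempty)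
    (hS : ∀ B ∈ F, B ∉ G → ∃ p ∈ S, p ∈ B) : tau F ≤ tau G + S.card := by
  classical
  obtain ⟨T, hT, hTG⟩ := exists_piercing_card_eq_tau hG
  have hST : Piercing (T ∪ S) F := by
    intro B hB
    by_cases hBG : B ∈ G
    · obtain ⟨p, hpT, hpB⟩ := hTG B hBG
      exact ⟨p, Finset.mem_union_left S hpT, hpB⟩
    · obtain ⟨p, hpS, hpB⟩ := hS B hB hBG
      exact ⟨p, Finset.mem_union_right T hpS, hpB⟩
  calc tau F ≤ (T ∪ S).card := tau_le_card hST
    _ ≤ T.card + S.card := Finset.card_union_le T S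
    _ = tau G + S.card := by rw [hT]

lemma bddAbove_nu_set (F : Finset (Set α)) :
    BddAbove {n | ∃ G ⊆ F, G.card = n ∧ (G : Set (Set α)).PairwiseDisjoint id} :=
  ⟨F.card, fun _ ⟨_, hG, hn, _⟩ => hn ▸ Finset.card_le_card hG⟩

lemma card_le_nu {G F : Finset (Set α)} (hGF : G ⊆ F)
    (hG : (G : Set (Set α)).PairwiseDisjoint id) : G.card ≤ nu F :=
  le_csSup (bddAbove_nu_set F) ⟨G, hGF, rfl, hG⟩

lemma exists_pairwiseDisjoint_card_eq_nu (F : Finset (Set α)) :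
    ∃ G ⊆ F, G.card = nu F ∧ (G : Set (Set α)).PairwiseDisjoint id :=
  Nat.sSup_mem (s := {n | ∃ G ⊆ F, G.card = n ∧ (G : Set (Set α)).PairwiseDisjoint id})
    ⟨0, ∅, Finset.empty_subset F, rfl, by simp⟩ (bddAbove_nu_set F)

lemma one_le_nu {F : Finset (Set α)} (hF : F.Nonempty) : 1 ≤ nu F := by
  obtain ⟨B, hB⟩ := hF
  simpa using card_le_nu (Finset.singleton_subset_iff.2 hB) (by simp)

lemma nu_add_card_le {F G H : Finset (Set α)} (hGF : G ⊆ F) (hHF : H ⊆ F)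
    (hH : (H : Set (Set α)).PairwiseDisjoint id) (hHne : ∀ A ∈ H, A.Nonempty)
    (hHG : ∀ A ∈ H, ∀ C ∈ G, Disjoint A C) : nu G + H.card ≤ nu F := by
  classical
  obtain ⟨G', hG'G, hG'card, hG'⟩ := exists_pairwiseDisjoint_card_eq_nu G
  have hdisj : Disjoint G' H := Finset.disjoint_left.2 fun A hAG' hAH =>
    (hHne A hAH).ne_empty (disjoint_self.1 (hHG A hAH A (hG'G hAG')))
  calc nu G + H.card = (G' ∪ H).card := by rw [Finset.card_union_of_disjoint hdisj, hG'card]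
    _ ≤ nu F := card_le_nu (Finset.union_subset (hG'G.trans hGF) hHF) <| by
      rw [Finset.coe_union]
      exact hG'.union hH fun C hC A hA _ => (hHG A hA C (hG'G hC)).symm

end Family

lemma exists_forall_mem_Icc_of_pairwise_not_disjoint {α ι : Type*} [SemilatticeSup α]
    [Nonempty α] {s : Finset ι} {l u : ι → α}
    (h : ∀ i ∈ s, ∀ j ∈ s, ¬ Disjoint (Icc (l i) (u i)) (Icc (l j) (u j))) :
    ∃ x, ∀ i ∈ s, x ∈ Icc (l i) (u i) := by
  rcases s.eq_empty_or_nonempty with rfl | hs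
  · exact ⟨Classical.arbitrary α, by simp⟩
  refine ⟨s.sup' hs l, fun i hi => ⟨Finset.le_sup' l hi, Finset.sup'_le hs l fun j hj => ?_⟩⟩
  obtain ⟨z, hzj, hzi⟩ := not_disjoint_iff.1 (h j hj i hi)
  exact hzj.1.trans hzi.2

lemma vecCons_mem_Icc_of_mem {l u p : Fin 2 → ℝ} (hp : p ∈ Icc l u) {b : ℝ}
    (hb : b ∈ Icc (l 0) (u 0)) : ![b, p 1] ∈ Icc l u := by
  simp only [mem_Icc, Pi.le_def, Fin.forall_fin_two] at hp ⊢
  exact ⟨⟨hb.1, hp.1.2⟩, hb.2, hp.2.2⟩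

section TwoLines

variable {F : Finset (Set (Fin 2 → ℝ))} {l u : Set (Fin 2 → ℝ) → Fin 2 → ℝ} {c₁ c₂ : ℝ}

lemma exists_forall_mem_of_pairwise_not_disjoint (hbox : ∀ B ∈ F, B = Icc (l B) (u B))
    (h : ∀ C ∈ F, ∀ D ∈ F, ¬ Disjoint C D) : ∃ q, ∀ C ∈ F, q ∈ C := by
  obtain ⟨q, hq⟩ := exists_forall_mem_Icc_of_pairwise_not_disjoint (s := F) (l := l) (u := u)
    fun C hC D hD => hbox C hC ▸ hbox D hD ▸ h C hC D hD
  exact ⟨q, fun C hC => hbox C hC ▸ hq C hC⟩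

lemma exists_forall_mem_of_right_lt (hbox : ∀ B ∈ F, B = Icc (l B) (u B)) {b : ℝ}
    (hb : ∀ C ∈ F, ∀ D ∈ F, Disjoint C D → b ≤ max (u C 0) (u D 0)) :
    ∃ q, ∀ C ∈ F, u C 0 < b → q ∈ C := by
  obtain ⟨q, hq⟩ := exists_forall_mem_of_pairwise_not_disjoint
    (F := F.filter (u · 0 < b)) (fun B hB => hbox B (Finset.mem_filter.1 hB).1)
    fun C hC D hD hCD => by
      rw [Finset.mem_filter] at hC hD
      exact (hb C hC.1 D hD.1 hCD).not_gt (max_lt hC.2 hD.2)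
  exact ⟨q, fun C hC hCb => hq C (Finset.mem_filter.2 ⟨hC, hCb⟩)⟩

lemma mem_of_left_le (hbox : ∀ B ∈ F, B = Icc (l B) (u B))
    (hline : ∀ B ∈ F, ∃ p ∈ B, p 1 = c₁ ∨ p 1 = c₂) {b : ℝ} {q : Fin 2 → ℝ}
    (hq : ∀ C ∈ F, u C 0 < b → q ∈ C) {B : Set (Fin 2 → ℝ)} (hB : B ∈ F) (hlb : l B 0 ≤ b) :
    q ∈ B ∨ ![b, c₁] ∈ B ∨ ![b, c₂] ∈ B := by
  rcases lt_or_ge (u B 0) b with hub | hub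
  · exact .inl (hq B hB hub)
  obtain ⟨p, hpB, hp⟩ := hline B hB
  have hbB : ![b, p 1] ∈ B := by
    rw [hbox B hB] at hpB ⊢
    exact vecCons_mem_Icc_of_mem hpB ⟨hlb, hub⟩
  rcases hp with hp | hp <;> rw [hp] at hbB <;> simp [hbB]

lemma nu_filter_add_two_le (hbox : ∀ B ∈ F, B = Icc (l B) (u B)) {b : ℝ}
    {B₁ B₂ : Set (Fin 2 → ℝ)} (hB₁ : B₁ ∈ F) (hB₂ : B₂ ∈ F) (hne₁ : B₁.Nonempty)
    (hne₂ : B₂.Nonempty) (hB₁₂ : Disjoint B₁ B₂) (hb₁ : u B₁ 0 ≤ b) (hb₂ : u B₂ 0 ≤ b) :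
    nu (F.filter (b < l · 0)) + 2 ≤ nu F := by
  classical
  have hfar : ∀ A ∈ F, u A 0 ≤ b → ∀ C ∈ F.filter (b < l · 0), Disjoint A C := by
    intro A hA hAb C hC
    rw [Finset.mem_filter] at hC
    rw [hbox A hA, hbox C hC.1]
    exact disjoint_left.2 fun z hzA hzC => (hAb.trans_lt hC.2).not_ge ((hzC.1 0).trans (hzA.2 0))
  have hB₁B₂ : B₁ ≠ B₂ := fun h => hne₁.ne_empty (disjoint_self.1 (h ▸ hB₁₂))
  have := nu_add_card_le (Finset.filter_subset _ F) (H := {B₁, B₂})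
    (Finset.insert_subset hB₁ (Finset.singleton_subset_iff.2 hB₂))
    (by rw [Finset.coe_pair]; exact Set.pairwise_pair_of_symm.2 fun _ => hB₁₂)
    (by simpa using ⟨hne₁, hne₂⟩) <| by
      simp only [Finset.mem_insert, Finset.mem_singleton, forall_eq_or_imp, forall_eq]
      exact ⟨hfar B₁ hB₁ hb₁, hfar B₂ hB₂ hb₂⟩
  rwa [Finset.card_pair hB₁B₂] at this

lemma exists_nu_add_two_le_and_tau_le_add_three (hbox : ∀ B ∈ F, B = Icc (l B) (u B))
    (hline : ∀ B ∈ F, ∃ p ∈ B, p 1 = c₁ ∨ p 1 = c₂) (hpair : ∃ B₁ ∈ F, ∃ B₂ ∈ F, Disjoint B₁ B₂) :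
    ∃ G ⊆ F, nu G + 2 ≤ nu F ∧ tau F ≤ tau G + 3 := by
  classical
  obtain ⟨⟨B₁, B₂⟩, hB, hmin⟩ := ((F ×ˢ F).filter fun P => Disjoint P.1 P.2).exists_min_image
    (fun P => max (u P.1 0) (u P.2 0)) (by simpa [Finset.Nonempty, and_assoc] using hpair)
  simp only [Finset.mem_filter, Finset.mem_product] at hB hmin
  obtain ⟨⟨hB₁, hB₂⟩, hB₁₂⟩ := hB
  set b := max (u B₁ 0) (u B₂ 0)
  obtain ⟨q, hq⟩ := exists_forall_mem_of_right_lt hbox (b := b)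
    fun C hC D hD hCD => hmin (C, D) ⟨⟨hC, hD⟩, hCD⟩
  have hne : ∀ B ∈ F, B.Nonempty := fun B hB =>
    let ⟨p, hp, _⟩ := hline B hB; ⟨p, hp⟩
  refine ⟨F.filter (b < l · 0), Finset.filter_subset _ F, ?_, ?_⟩
  · exact nu_filter_add_two_le hbox hB₁ hB₂ (hne B₁ hB₁) (hne B₂ hB₂) hB₁₂ le_sup_left le_sup_right
  · have hS (B) (hB : B ∈ F) (hBG : B ∉ F.filter (b < l · 0)) :
        ∃ p ∈ ({q, ![b, c₁], ![b, c₂]} : Finset _), p ∈ B := by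
      have hlb : l B 0 ≤ b := not_lt.1 fun h => hBG (Finset.mem_filter.2 ⟨hB, h⟩)
      rcases mem_of_left_le hbox hline hq hB hlb with h | h | h <;> exact ⟨_, by simp, h⟩
    calc tau F ≤ tau (F.filter (b < l · 0)) + ({q, ![b, c₁], ![b, c₂]} : Finset _).card :=
          tau_le_tau_add_card (fun B hB => hne B (Finset.mem_filter.1 hB).1) hS
      _ ≤ _ := by grw [Finset.card_le_three]

theorem tau_le_three_mul_nu_div_two (hbox : ∀ B ∈ F, B = Icc (l B) (u B))
    (hline : ∀ B ∈ F, ∃ p ∈ B, p 1 = c₁ ∨ p 1 = c₂) : tau F ≤ 3 * nu F / 2 := by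
  induction hn : nu F using Nat.strong_induction_on generalizing F with
  | _ n ih =>
  by_cases hpair : ∃ B₁ ∈ F, ∃ B₂ ∈ F, Disjoint B₁ B₂
  · obtain ⟨G, hGF, hnu, htau⟩ := exists_nu_add_two_le_and_tau_le_add_three hbox hline hpair
    have := ih (nu G) (by omega) (fun B hB => hbox B (hGF hB)) (fun B hB => hline B (hGF hB)) rfl
    omega
  push Not at hpair
  obtain ⟨q, hq⟩ := exists_forall_mem_of_pairwise_not_disjoint hbox hpair
  rcases F.eq_empty_or_nonempty with rfl | hF
  · exact (tau_le_card (S := ∅) (F := ∅) (by simp [Piercing])).trans (Nat.zero_le _)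
  · have h1 := one_le_nu hF
    have hq1 := tau_le_card (S := {q}) fun B hB => ⟨q, Finset.mem_singleton_self q, hq B hB⟩
    rw [Finset.card_singleton] at hq1
    omega

end TwoLines

/-- Lemma 2 (two-line lemma): if every rectangle of a finite family in ℝ²
meets one of two horizontal lines y = c₁, y = c₂, then τ(𝓑) ≤ ⌊3ν(𝓑)/2⌋. -/
theorem tau_le_of_two_lines (F : Finset (Set (Fin 2 → ℝ)))
    (hF : ∀ B ∈ F, IsBox 2 B)
    (c₁ c₂ : ℝ)
    (hline : ∀ B ∈ F, ∃ p ∈ B, p 1 = c₁ ∨ p 1 = c₂) :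
    tau F ≤ 3 * nu F / 2 := by
  choose! l u hbox using hF
  exact tau_le_three_mul_nu_div_two (fun B hB => (hbox B hB).2) hline
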